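/- arXiv:1411.2711 — 8 statements merged into one kernel-verified Lean document; each statement's English description precedes it below -/
import Mathlib

section
/- Let T : A → X be a local derivation from a C*-algebra A into a Banach A-bimodule X. Then a·T(b)·c = 0 for all a, b, c ∈ A with ab = bc = 0. -/
/-- **Kadison's sublemma.**  If `T` is a local derivation from a C*-algebra `A`
into a Banach `A`-bimodule `X`, then `a • T(b) • c = 0` whenever `a * b = b * c = 0`. -/
theorem local_derivation_apply_eq_zero_of_mul_eq_zero
    {A X : Type*} [NonUnitalCStarAlgebra A]
    [NormedAddCommGroup X] [NormedSpace ℂ X] [CompleteSpace X]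
    (l r : A →ₗ[ℂ] X →ₗ[ℂ] X)
    (hl : ∀ (a b : A) (x : X), l (a * b) x = l a (l b x))
    (hr : ∀ (a b : A) (x : X), r (a * b) x = r b (r a x))
    (hlr : ∀ (a b : A) (x : X), l a (r b x) = r b (l a x))
    (hln : ∀ (a : A) (x : X), ‖l a x‖ ≤ ‖a‖ * ‖x‖)
    (hrn : ∀ (a : A) (x : X), ‖r a x‖ ≤ ‖x‖ * ‖a‖)
    (T : A →ₗ[ℂ] X)
    (hloc : ∀ a : A, ∃ D : A →ₗ[ℂ] X,
      (∀ u v : A, D (u * v) = r v (D u) + l u (D v)) ∧ T a = D a) :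
    ∀ a b c : A, a * b = 0 → b * c = 0 → l a (r c (T b)) = 0 := by
  intro a b c hab hbc
  obtain ⟨D, hD, hTb⟩ := hloc b
  have h1 : r c (D b) = - l b (D c) := by
    have h := hD b c
    rw [hbc, map_zero] at h
    exact eq_neg_of_add_eq_zero_left h.symm
  rw [hTb, h1, map_neg, ← hl a b (D c), hab]
  simp
end

section
/- Let A be a unital C*-algebra, let X be a Banach right A-module, and let T : A → X be a bounded linear operator. The following are equivalent: (1) T(x)·a = 0 whenever x, a ∈ A satisfy xa = 0; (2) T(b)·a = 0 whenever a, b are self-adjoint elements of A with ba = 0; (3) T(a)·1 = T(1)·a for every a ∈ A, where 1 is the unit of A. -/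
/-!
The content is (2) ⇒ (3), an instance of a statement about any bounded bilinear map
`φ : A × A → X` with `φ(x, y) = 0` for orthogonal self-adjoint `x, y`: `φ(a, 1) = φ(1, a)`.

Let `a` be self-adjoint with spectrum in `[0, N]`. Applying the functional calculus to the tent
functions centred at `0, …, N` gives a partition of unity `e₀, …, e_N` with `eₙeₘ = 0` for
`|n - m| ≥ 2`, and `a' = ∑ n • eₙ` lies within `1` of `a`. As `φ(eₙ, eₘ)` vanishes off the band
`|n - m| ≤ 1`, and on that band `n - m = sin(π(n - m)/2)`, the addition formula for the sine gives
`φ(a', 1) - φ(1, a') = φ(S, C) - φ(C, S)` with `S = ∑ sin(πn/2) • eₙ`, `C = ∑ cos(πn/2) • eₙ`,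
both of norm `≤ 1`. Hence the linear map `a ↦ φ(a, 1) - φ(1, a)`, which kills `1`, is bounded on
the self-adjoint elements (shift the spectrum into `[0, N]`), so it vanishes on them by
homogeneity, and on all of `A` by taking real and imaginary parts.
-/

open Finset Real

namespace SelfAdjointZeroProduct

noncomputable def ramp (x : ℝ) : ℝ := max 0 (min 1 x)

-- The tent of height 1 on `[n - 1, n + 1]`; as a difference of shifted ramps its sums telescope.
noncomputable def hat (n : ℕ) (s : ℝ) : ℝ := ramp (s - n + 1) - ramp (s - n)

lemma continuous_ramp : Continuous ramp := by unfold ramp; fun_prop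

lemma monotone_ramp : Monotone ramp := fun _ _ h => max_le_max le_rfl (min_le_min le_rfl h)

lemma ramp_of_nonpos {x : ℝ} (hx : x ≤ 0) : ramp x = 0 :=
  max_eq_left (min_le_of_right_le hx)

lemma ramp_of_one_le {x : ℝ} (hx : 1 ≤ x) : ramp x = 1 := by
  rw [ramp, min_eq_left hx, max_eq_right zero_le_one]

lemma continuous_hat (n : ℕ) : Continuous (hat n) := by
  unfold hat; have := continuous_ramp; fun_prop

lemma hat_nonneg (n : ℕ) (s : ℝ) : 0 ≤ hat n s :=
  sub_nonneg.mpr (monotone_ramp (by linarith))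

lemma hat_eq_zero_of_one_le_abs {n : ℕ} {s : ℝ} (h : 1 ≤ |s - n|) : hat n s = 0 := by
  rcases le_abs'.mp h with h | h
  · rw [hat, ramp_of_nonpos (by linarith), ramp_of_nonpos (by linarith), sub_zero]
  · rw [hat, ramp_of_one_le (by linarith), ramp_of_one_le h, sub_self]

lemma abs_sub_lt_one_of_hat_ne_zero {n : ℕ} {s : ℝ} (h : hat n s ≠ 0) : |s - n| < 1 :=
  not_le.mp (mt hat_eq_zero_of_one_le_abs h)

lemma hat_mul_hat_eq_zero {n m : ℕ} (hnm : ¬(m ≤ n + 1 ∧ n ≤ m + 1)) (s : ℝ) :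
    hat n s * hat m s = 0 := by
  by_contra h
  obtain ⟨hn, hm⟩ := mul_ne_zero_iff.mp h
  have hn := abs_lt.mp (abs_sub_lt_one_of_hat_ne_zero hn)
  have hm := abs_lt.mp (abs_sub_lt_one_of_hat_ne_zero hm)
  rcases (by omega : n + 2 ≤ m ∨ m + 2 ≤ n) with h | h
  all_goals
    have := (Nat.cast_le (α := ℝ)).mpr h
    push_cast at this
    linarith

lemma sum_hat_eq_one {N : ℕ} {s : ℝ} (h0 : 0 ≤ s) (hN : s ≤ N) :
    ∑ n ∈ range (N + 1), hat n s = 1 := by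
  let f : ℕ → ℝ := fun n => ramp (s - n + 1)
  calc ∑ n ∈ range (N + 1), hat n s = ∑ n ∈ range (N + 1), (f n - f (n + 1)) := by
        refine sum_congr rfl fun n _ => ?_
        simp only [hat, f, Nat.cast_succ]; ring_nf
    _ = f 0 - f (N + 1) := sum_range_sub' f (N + 1)
    _ = 1 := by
        simp only [f, Nat.cast_zero, Nat.cast_succ]
        rw [ramp_of_one_le (by linarith), ramp_of_nonpos (by linarith), sub_zero]

lemma abs_sum_mul_hat_le_one {N : ℕ} {s : ℝ} (h0 : 0 ≤ s) (hN : s ≤ N) (w : ℕ → ℝ)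
    (hw : ∀ n, hat n s ≠ 0 → |w n| ≤ 1) : |∑ n ∈ range (N + 1), w n * hat n s| ≤ 1 :=
  calc |∑ n ∈ range (N + 1), w n * hat n s|
      ≤ ∑ n ∈ range (N + 1), |w n| * hat n s := by
        refine (abs_sum_le_sum_abs _ _).trans_eq (sum_congr rfl fun n _ => ?_)
        rw [abs_mul, abs_of_nonneg (hat_nonneg n s)]
    _ ≤ ∑ n ∈ range (N + 1), hat n s := by
        refine sum_le_sum fun n _ => ?_
        by_cases h : hat n s = 0
        · simp [h]
        · exact mul_le_of_le_one_left (hat_nonneg n s) (hw n h)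
    _ = 1 := sum_hat_eq_one h0 hN

lemma abs_sub_sum_mul_hat_le_one {N : ℕ} {s : ℝ} (h0 : 0 ≤ s) (hN : s ≤ N) :
    |s - ∑ n ∈ range (N + 1), n * hat n s| ≤ 1 := by
  have hs : s - ∑ n ∈ range (N + 1), n * hat n s = ∑ n ∈ range (N + 1), (s - n) * hat n s := by
    simp only [sub_mul, sum_sub_distrib, ← mul_sum, sum_hat_eq_one h0 hN, mul_one]
  rw [hs]
  exact abs_sum_mul_hat_le_one h0 hN _ fun n hn => (abs_sub_lt_one_of_hat_ne_zero hn).le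

lemma sin_mul_cos_sub_cos_mul_sin_eq_sub {n m : ℕ} (hnm : m ≤ n + 1 ∧ n ≤ m + 1) :
    Real.sin (π * n / 2) * Real.cos (π * m / 2) - Real.cos (π * n / 2) * Real.sin (π * m / 2)
      = n - m := by
  rw [← Real.sin_sub]
  rcases (by omega : m = n + 1 ∨ m = n ∨ n = m + 1) with rfl | rfl | rfl <;> push_cast
  · rw [show π * n / 2 - π * (n + 1) / 2 = -(π / 2) by ring, Real.sin_neg, Real.sin_pi_div_two]; ring
  · simp
  · rw [show π * (m + 1) / 2 - π * m / 2 = π / 2 by ring, Real.sin_pi_div_two]; ring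

section Bilinear

variable {R M P : Type*} [CommRing R] [AddCommGroup M] [Module R M] [AddCommGroup P] [Module R P]

lemma apply_sum_smul_sum_smul (B : M →ₗ[R] M →ₗ[R] P) (s : Finset ℕ) (α β : ℕ → R) (e : ℕ → M) :
    B (∑ n ∈ s, α n • e n) (∑ m ∈ s, β m • e m)
      = ∑ n ∈ s, ∑ m ∈ s, (α n * β m) • B (e n) (e m) := by
  simp only [map_sum, map_smul, LinearMap.sum_apply, LinearMap.smul_apply, smul_sum, smul_smul,
    mul_comm (β _)]
  exact sum_comm

lemma band_commutator_eq (B : M →ₗ[R] M →ₗ[R] P) (s : Finset ℕ) (e : ℕ → M) (f g : ℕ → R)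
    (hfg : ∀ n m, m ≤ n + 1 ∧ n ≤ m + 1 → f n * g m - g n * f m = n - m)
    (hB : ∀ n m, ¬(m ≤ n + 1 ∧ n ≤ m + 1) → B (e n) (e m) = 0) :
    B (∑ n ∈ s, (n : R) • e n) (∑ m ∈ s, e m) - B (∑ n ∈ s, e n) (∑ m ∈ s, (m : R) • e m)
      = B (∑ n ∈ s, f n • e n) (∑ m ∈ s, g m • e m)
        - B (∑ n ∈ s, g n • e n) (∑ m ∈ s, f m • e m) := by
  have hone : ∑ m ∈ s, e m = ∑ m ∈ s, (1 : R) • e m := by simp only [one_smul]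
  simp only [hone, apply_sum_smul_sum_smul, ← sum_sub_distrib, ← sub_smul]
  refine sum_congr rfl fun n _ => sum_congr rfl fun m _ => ?_
  by_cases hnm : m ≤ n + 1 ∧ n ≤ m + 1
  · rw [hfg n m hnm]; ring_nf
  · simp only [hB n m hnm, smul_zero]

end Bilinear

lemma eq_zero_of_forall_norm_smul_le {F : Type*} [NormedAddCommGroup F] [NormedSpace ℝ F]
    (y : F) (C : ℝ) (h : ∀ t : ℝ, ‖t • y‖ ≤ C) : y = 0 := by
  by_contra hy
  have hy := norm_pos_iff.mpr hy
  have hC : 0 ≤ C := by simpa using h 0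
  have := h ((C + 1) / ‖y‖)
  rw [norm_smul, Real.norm_of_nonneg (by positivity), div_mul_cancel₀ _ hy.ne'] at this
  linarith

section Partition

variable {A : Type*} [CStarAlgebra A] {a : A} {N : ℕ}

lemma sum_smul_cfc_hat (s : Finset ℕ) (w : ℕ → ℝ) :
    ∑ n ∈ s, w n • cfc (hat n) a = cfc (fun x => ∑ n ∈ s, w n * hat n x) a := by
  have hfun : (fun x => ∑ n ∈ s, w n * hat n x) = ∑ n ∈ s, fun x => w n * hat n x := by
    ext x; simp only [Finset.sum_apply]
  have := continuous_hat
  rw [hfun, cfc_sum _ a s fun n _ => by fun_prop]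
  exact sum_congr rfl fun n _ => (cfc_const_mul (w n) (hat n) a).symm

lemma sum_cfc_hat_eq_one (ha : IsSelfAdjoint a) (hspec : spectrum ℝ a ⊆ Set.Icc 0 (N : ℝ)) :
    ∑ n ∈ range (N + 1), cfc (hat n) a = 1 := by
  calc ∑ n ∈ range (N + 1), cfc (hat n) a
      = cfc (fun x => ∑ n ∈ range (N + 1), 1 * hat n x) a := by
        rw [← sum_smul_cfc_hat]; simp only [one_smul]
    _ = cfc (fun _ => 1 : ℝ → ℝ) a :=
        cfc_congr fun x hx => by simpa using sum_hat_eq_one (hspec hx).1 (hspec hx).2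
    _ = 1 := cfc_const_one ℝ a

lemma cfc_hat_mul_cfc_hat_eq_zero {n m : ℕ} (hnm : ¬(m ≤ n + 1 ∧ n ≤ m + 1)) :
    cfc (hat n) a * cfc (hat m) a = 0 := by
  have := continuous_hat
  rw [← cfc_mul _ _ a, ← cfc_const_zero ℝ a]
  exact cfc_congr fun x _ => hat_mul_hat_eq_zero hnm x

lemma norm_sum_smul_cfc_hat_le_one (hspec : spectrum ℝ a ⊆ Set.Icc 0 (N : ℝ)) (w : ℕ → ℝ)
    (hw : ∀ n, |w n| ≤ 1) : ‖∑ n ∈ range (N + 1), w n • cfc (hat n) a‖ ≤ 1 := by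
  rw [sum_smul_cfc_hat]
  exact norm_cfc_le zero_le_one fun x hx =>
    abs_sum_mul_hat_le_one (hspec hx).1 (hspec hx).2 w fun n _ => hw n

lemma norm_sub_sum_smul_cfc_hat_le_one (ha : IsSelfAdjoint a)
    (hspec : spectrum ℝ a ⊆ Set.Icc 0 (N : ℝ)) :
    ‖a - ∑ n ∈ range (N + 1), (n : ℝ) • cfc (hat n) a‖ ≤ 1 := by
  have := continuous_hat
  nth_rw 1 [sum_smul_cfc_hat, ← cfc_id' ℝ a]
  rw [← cfc_sub _ _ a]
  exact norm_cfc_le zero_le_one fun x hx => abs_sub_sum_mul_hat_le_one (hspec hx).1 (hspec hx).2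

end Partition

section Bound

variable {A X : Type*} [CStarAlgebra A] [NormedAddCommGroup X] [NormedSpace ℂ X]
  (φ : A →ₗ[ℂ] A →ₗ[ℂ] X) {K : ℝ} (hK : 0 ≤ K) (hφ : ∀ x y, ‖φ x y‖ ≤ K * ‖x‖ * ‖y‖)
  (hφ0 : ∀ x y, IsSelfAdjoint x → IsSelfAdjoint y → x * y = 0 → φ x y = 0)
include hK hφ hφ0

lemma norm_apply_one_sub_one_apply_le [Nontrivial A] {a : A} {N : ℕ} (ha : IsSelfAdjoint a)
    (hspec : spectrum ℝ a ⊆ Set.Icc 0 (N : ℝ)) : ‖φ a 1 - φ 1 a‖ ≤ 4 * K := by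
  set e : ℕ → A := fun n => cfc (hat n) a
  set sn : ℕ → ℝ := fun n => Real.sin (π * n / 2)
  set cs : ℕ → ℝ := fun n => Real.cos (π * n / 2)
  set a' := ∑ n ∈ range (N + 1), (n : ℝ) • e n
  set S := ∑ n ∈ range (N + 1), sn n • e n
  set C := ∑ n ∈ range (N + 1), cs n • e n
  have hband : φ a' 1 - φ 1 a' = φ S C - φ C S := by
    have := band_commutator_eq (φ.restrictScalars₁₂ ℝ ℝ) (range (N + 1)) e sn cs
      (fun n m h => sin_mul_cos_sub_cos_mul_sin_eq_sub h)
      (fun n m h => hφ0 _ _ (cfc_predicate _ _) (cfc_predicate _ _)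
        (cfc_hat_mul_cfc_hat_eq_zero h))
    rwa [sum_cfc_hat_eq_one ha hspec] at this
  have hle : ∀ x y : A, ‖x‖ ≤ 1 → ‖y‖ ≤ 1 → ‖φ x y‖ ≤ K := fun x y hx hy =>
    calc ‖φ x y‖ ≤ K * ‖x‖ * ‖y‖ := hφ x y
      _ ≤ K * 1 * 1 := by gcongr
      _ = K := by ring
  have hS : ‖S‖ ≤ 1 := norm_sum_smul_cfc_hat_le_one hspec sn fun n => Real.abs_sin_le_one _
  have hC : ‖C‖ ≤ 1 := norm_sum_smul_cfc_hat_le_one hspec cs fun n => Real.abs_cos_le_one _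
  have happrox : ‖a - a'‖ ≤ 1 := norm_sub_sum_smul_cfc_hat_le_one ha hspec
  calc ‖φ a 1 - φ 1 a‖ = ‖(φ (a - a') 1 - φ 1 (a - a')) + (φ S C - φ C S)‖ := by
        rw [← hband, map_sub, map_sub, LinearMap.sub_apply]; abel_nf
    _ ≤ ‖φ (a - a') 1‖ + ‖φ 1 (a - a')‖ + (‖φ S C‖ + ‖φ C S‖) :=
        norm_add_le_of_le (norm_sub_le _ _) (norm_sub_le _ _)
    _ ≤ K + K + (K + K) := by
        gcongr <;> apply hle <;> first | assumption | exact norm_one.le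
    _ = 4 * K := by ring

lemma apply_one_eq_one_apply_of_isSelfAdjoint {a : A} (ha : IsSelfAdjoint a) :
    φ a 1 = φ 1 a := by
  obtain hA | hA := subsingleton_or_nontrivial A
  · rw [Subsingleton.elim a 1]
  set D : A →ₗ[ℂ] X := φ.flip 1 - φ 1
  have hD : ∀ x, D x = φ x 1 - φ 1 x := fun x => rfl
  have hD1 : D 1 = 0 := sub_self _
  rw [← sub_eq_zero, ← hD]
  refine eq_zero_of_forall_norm_smul_le (D a) (4 * K) fun t => ?_
  set b := t • a
  have hb : IsSelfAdjoint b := (IsSelfAdjoint.all t).smul ha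
  set c := b + algebraMap ℝ A ‖b‖
  have hc : IsSelfAdjoint c := hb.add (.algebraMap A (.all _))
  have hDc : D c = t • D a := by
    rw [map_add, LinearMap.map_smul_of_tower, Algebra.algebraMap_eq_smul_one,
      LinearMap.map_smul_of_tower, hD1, smul_zero, add_zero]
  have hspec : spectrum ℝ c ⊆ Set.Icc 0 (⌈2 * ‖b‖⌉₊ : ℝ) := by
    rw [← spectrum.add_singleton_eq]
    rintro _ ⟨s, hs, _, rfl, rfl⟩
    have hs := abs_le.mp (spectrum.norm_le_norm_of_mem hs)
    have := Nat.le_ceil (2 * ‖b‖)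
    constructor <;> linarith
  rw [← hDc, hD]
  exact norm_apply_one_sub_one_apply_le φ hK hφ hφ0 hc hspec

theorem apply_one_eq_one_apply (a : A) : φ a 1 = φ 1 a := by
  have hre := apply_one_eq_one_apply_of_isSelfAdjoint φ hK hφ hφ0 (realPart a).2
  have him := apply_one_eq_one_apply_of_isSelfAdjoint φ hK hφ hφ0 (imaginaryPart a).2
  rw [← realPart_add_I_smul_imaginaryPart a]
  simp only [map_add, map_smul, LinearMap.add_apply, LinearMap.smul_apply, hre, him]

end Bound

end SelfAdjointZeroProduct

open SelfAdjointZeroProduct in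
theorem left_annihilator_preserving_tfae_general
    {A X : Type*} [CStarAlgebra A]
    [NormedAddCommGroup X] [NormedSpace ℂ X]
    (r : A →ₗ[ℂ] X →ₗ[ℂ] X)
    (hr : ∀ (a b : A) (x : X), r (a * b) x = r b (r a x))
    (hrn : ∀ (a : A) (x : X), ‖r a x‖ ≤ ‖x‖ * ‖a‖)
    (T : A →L[ℂ] X) :
    ((∀ x a : A, x * a = 0 → r a (T x) = 0) ↔
        (∀ a : A, r 1 (T a) = r a (T 1))) ∧
    ((∀ a b : A, IsSelfAdjoint a → IsSelfAdjoint b → b * a = 0 → r a (T b) = 0) ↔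
        (∀ a : A, r 1 (T a) = r a (T 1))) := by
  have h31 : (∀ a : A, r 1 (T a) = r a (T 1)) → ∀ x a : A, x * a = 0 → r a (T x) = 0 := by
    intro h3 x a hxa
    rw [← one_mul a, hr, h3, ← hr, hxa, map_zero, LinearMap.zero_apply]
  have h23 : (∀ a b : A, IsSelfAdjoint a → IsSelfAdjoint b → b * a = 0 → r a (T b) = 0) →
      ∀ a : A, r 1 (T a) = r a (T 1) := fun h2 =>
    apply_one_eq_one_apply (r.flip ∘ₗ (T : A →ₗ[ℂ] X)) (norm_nonneg T)
      (fun x y => (hrn y (T x)).trans (by gcongr; exact T.le_opNorm x))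
      (fun x y hx hy hxy => h2 y x hy hx hxy)
  exact ⟨⟨fun h1 => h23 fun a b _ _ hba => h1 b a hba, h31⟩,
    ⟨h23, fun h3 a b _ _ hba => h31 h3 b a hba⟩⟩

/-- Characterization of bounded left-annihilator-preserving operators from a unital
C*-algebra `A` into a Banach right `A`-module `X` (right action `r a x = x • a`):
the following are equivalent:
(1) `T(x) • a = 0` whenever `x * a = 0`;
(2) `T(b) • a = 0` whenever `a, b` are self-adjoint with `b * a = 0`;
(3) `T(a) • 1 = T(1) • a` for all `a`. -/
theorem left_annihilator_preserving_tfae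
    {A X : Type*} [CStarAlgebra A]
    [NormedAddCommGroup X] [NormedSpace ℂ X] [CompleteSpace X]
    (r : A →ₗ[ℂ] X →ₗ[ℂ] X)
    (hr : ∀ (a b : A) (x : X), r (a * b) x = r b (r a x))
    (hrn : ∀ (a : A) (x : X), ‖r a x‖ ≤ ‖x‖ * ‖a‖)
    (T : A →L[ℂ] X) :
    ((∀ x a : A, x * a = 0 → r a (T x) = 0) ↔
        (∀ a : A, r 1 (T a) = r a (T 1))) ∧
    ((∀ a b : A, IsSelfAdjoint a → IsSelfAdjoint b → b * a = 0 → r a (T b) = 0) ↔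
        (∀ a : A, r 1 (T a) = r a (T 1))) :=
  left_annihilator_preserving_tfae_general r hr hrn T
end

section
/- Let B = ℂ[X]/(X³) be the quotient of the polynomial ring ℂ[X] by the ideal generated by X³, and let T : B → B be the ℂ-linear map determined by T([λ₀ + λ₁X + λ₂X²]) = [λ₁X] for scalars λ₀, λ₁, λ₂ ∈ ℂ. Then: (i) T is a local derivation, i.e. for every b ∈ B there exists a ℂ-linear derivation D_b : B → B (satisfying D_b(uv) = D_b(u)v + uD_b(v) for all u, v ∈ B) with T(b) = D_b(b); and (ii) T is not a derivation. -/
open Polynomial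

noncomputable abbrev PolyQuot : Type :=
  Polynomial ℂ ⧸ Ideal.span {(X : Polynomial ℂ) ^ 3}

/-!
Whenever `f ∣ f' g`, the map `[p] ↦ [g p']` is a derivation of `R[X]/(f)`; for `f = X³` this
holds as soon as `X ∣ g`. Given `x = [a + bX + cX²]` with `b ≠ 0`, the choice
`g = X - (2c/b) X²` gives `g (b + 2cX) ≡ bX = T x`, and for `b = 0` the zero derivation works.
On the other hand `T(X · X) = T(X²) = 0`, while `T X · X + X · T X = 2X² ≠ 0`.
-/

namespace Polynomial

variable {R : Type*} [CommRing R]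

theorem mul_derivative_mem_span {f g : R[X]} (hfg : f ∣ derivative f * g) {p : R[X]}
    (hp : p ∈ Ideal.span {f}) : g * derivative p ∈ Ideal.span {f} := by
  obtain ⟨q, rfl⟩ := Ideal.mem_span_singleton.mp hp
  obtain ⟨h, hh⟩ := hfg
  refine Ideal.mem_span_singleton.mpr ⟨h * q + g * derivative q, ?_⟩
  rw [derivative_mul]
  linear_combination q * hh

noncomputable def quotientDerivation (f g : R[X]) (hfg : f ∣ derivative f * g) :
    Derivation R (R[X] ⧸ Ideal.span {f}) (R[X] ⧸ Ideal.span {f}) :=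
  Derivation.liftOfSurjective (Ideal.Quotient.mkₐ_surjective R _) (d := g • derivative')
    fun _ hp => by
      rw [Ideal.Quotient.mkₐ_eq_mk, Ideal.Quotient.eq_zero_iff_mem] at hp ⊢
      exact mul_derivative_mem_span hfg hp

theorem quotientDerivation_mk (f g : R[X]) (hfg : f ∣ derivative f * g) (p : R[X]) :
    quotientDerivation f g hfg (Ideal.Quotient.mk _ p) =
      Ideal.Quotient.mk _ (g * derivative p) := by
  rw [← Ideal.Quotient.mkₐ_eq_mk R, quotientDerivation, Derivation.liftOfSurjective_apply]
  rfl

theorem X_pow_dvd_derivative_X_pow_mul (n : ℕ) {g : R[X]} (hg : X ∣ g) :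
    (X : R[X]) ^ n ∣ derivative (X ^ n) * g := by
  obtain ⟨h, rfl⟩ := hg
  refine ⟨C (n : R) * h, ?_⟩
  rcases n with _ | n
  · simp
  · simp only [derivative_X_pow]; push_cast; ring

theorem mk_eq_mk_coeff_mod_X_pow_three (p : R[X]) :
    Ideal.Quotient.mk (Ideal.span {X ^ 3}) p =
      Ideal.Quotient.mk _ (C (p.coeff 0) + C (p.coeff 1) * X + C (p.coeff 2) * X ^ 2) := by
  rw [Ideal.Quotient.eq, Ideal.mem_span_singleton, X_pow_dvd_iff]
  intro d hd
  interval_cases d <;> simp [coeff_X]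

theorem mk_X_pow_ne_zero [Nontrivial R] {m n : ℕ} (h : n < m) :
    Ideal.Quotient.mk (Ideal.span {(X : R[X]) ^ m}) (X ^ n) ≠ 0 := by
  rw [Ne, Ideal.Quotient.eq_zero_iff_mem, Ideal.mem_span_singleton, X_pow_dvd_iff]
  exact fun hcoeff => (one_ne_zero : (1 : R) ≠ 0) (by simpa using hcoeff n h)

theorem exists_derivation_apply_eq {K : Type*} [Field K] (a b c : K) :
    ∃ D : Derivation K (K[X] ⧸ Ideal.span {(X : K[X]) ^ 3}) (K[X] ⧸ Ideal.span {(X : K[X]) ^ 3}),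
      D (Ideal.Quotient.mk _ (C a + C b * X + C c * X ^ 2)) = Ideal.Quotient.mk _ (C b * X) := by
  rcases eq_or_ne b 0 with rfl | hb
  · exact ⟨0, by simp⟩
  set e := 2 * c / b
  have hg : X ∣ X - C e * X ^ 2 := ⟨1 - C e * X, by ring⟩
  have hbe : C b * C e = 2 * C c := by rw [← C_mul, mul_div_cancel₀ _ hb, C_mul, C_ofNat]
  refine ⟨quotientDerivation _ _ (X_pow_dvd_derivative_X_pow_mul 3 hg), ?_⟩
  rw [quotientDerivation_mk, Ideal.Quotient.eq, Ideal.mem_span_singleton]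
  refine ⟨-(2 * C c * C e), ?_⟩
  simp only [derivative_add, derivative_C, derivative_mul, derivative_X, derivative_X_pow,
    Nat.cast_ofNat, C_ofNat]
  linear_combination (-X ^ 2) * hbe

end Polynomial

/-- **Kaplansky's example.**  The linear map `T` on `ℂ[X]/(X³)` determined by
`T [λ₀ + λ₁X + λ₂X²] = [λ₁ X]` is a local derivation which is not a derivation. -/
theorem local_derivation_not_derivation_on_poly_quot
    (T : PolyQuot →ₗ[ℂ] PolyQuot)
    (hT : ∀ a b c : ℂ,
      T (Ideal.Quotient.mk (Ideal.span {(X : Polynomial ℂ) ^ 3}) (C a + C b * X + C c * X ^ 2)) =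
        Ideal.Quotient.mk (Ideal.span {(X : Polynomial ℂ) ^ 3}) (C b * X)) :
    (∀ x : PolyQuot, ∃ D : PolyQuot →ₗ[ℂ] PolyQuot,
        (∀ u v : PolyQuot, D (u * v) = D u * v + u * D v) ∧ T x = D x) ∧
    ¬ (∀ u v : PolyQuot, T (u * v) = T u * v + u * T v) := by
  have hT_mk (p : ℂ[X]) : T (Ideal.Quotient.mk _ p) = Ideal.Quotient.mk _ (C (p.coeff 1) * X) := by
    rw [mk_eq_mk_coeff_mod_X_pow_three, hT]
  refine ⟨fun x => ?_, fun hT_leibniz => ?_⟩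
  · obtain ⟨p, rfl⟩ := Ideal.Quotient.mk_surjective x
    obtain ⟨D, hD⟩ := exists_derivation_apply_eq (p.coeff 0) (p.coeff 1) (p.coeff 2)
    refine ⟨D, fun u v => ?_, ?_⟩
    · simp only [Derivation.coeFn_coe, D.leibniz, smul_eq_mul]
      ring
    · rw [hT_mk, mk_eq_mk_coeff_mod_X_pow_three p, Derivation.coeFn_coe, hD]
  · have hX : T (Ideal.Quotient.mk _ X) = Ideal.Quotient.mk _ X := by simpa using hT_mk X
    have hX2 : T (Ideal.Quotient.mk _ (X ^ 2)) = 0 := by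
      rw [hT_mk, coeff_X_pow]; simp
    have h := hT_leibniz (Ideal.Quotient.mk _ X) (Ideal.Quotient.mk _ X)
    rw [← map_mul, ← pow_two, hX2, hX, ← map_mul, ← pow_two, eq_comm, ← two_smul ℂ,
      smul_eq_zero] at h
    exact h.elim (by norm_num) (mk_X_pow_ne_zero (by norm_num))
end

section
/- Let A be a C*-algebra, let X be a Banach A-bimodule, let n ≥ 1, and let T : Aⁿ → X be a local n-cocycle. Then for all a₀, a₁, …, a_{n+1} ∈ A satisfying a_j a_{j+1} = 0 for every j = 0, 1, …, n, one has a₀ · T(a₁, …, a_n) · a_{n+1} = 0. -/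
/-- Given `a = (a₁, …, a_{n+1})` (zero-indexed) and `j`, the `n`-tuple
`(a₁, …, a_{j-1}, a_j a_{j+1}, a_{j+2}, …, a_{n+1})`. -/
def mergeArg {A : Type*} [Mul A] {n : ℕ} (a : Fin (n + 1) → A) (j : Fin n) :
    Fin n → A := fun i =>
  if (i : ℕ) < (j : ℕ) then a i.castSucc
  else if i = j then a i.castSucc * a i.succ
  else a i.succ

/-- `Φ : Aⁿ → X` is an `n`-cocycle:
`a₁·Φ(a₂,…,a_{n+1}) + Σ_{j=1}^{n} (−1)^j Φ(a₁,…,a_j a_{j+1},…,a_{n+1})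
  + (−1)^{n+1} Φ(a₁,…,a_n)·a_{n+1} = 0`
(here `l` is the left action and `r` the right action of `A` on `X`). -/
def IsCocycle {A X : Type*} [NonUnitalCStarAlgebra A]
    [NormedAddCommGroup X] [NormedSpace ℂ X]
    (l r : A →ₗ[ℂ] X →ₗ[ℂ] X) {n : ℕ}
    (Φ : ContinuousMultilinearMap ℂ (fun _ : Fin n => A) X) : Prop :=
  ∀ a : Fin (n + 1) → A,
    l (a 0) (Φ fun i => a i.succ)
      + ∑ j : Fin n, ((-1 : ℂ) ^ ((j : ℕ) + 1)) • Φ (mergeArg a j)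
      + ((-1 : ℂ) ^ (n + 1)) • r (a (Fin.last n)) (Φ fun i => a i.castSucc) = 0

/-- If `T : Aⁿ → X` is a local `n`-cocycle, then
`a₀ · T(a₁, …, a_n) · a_{n+1} = 0` whenever `a_j a_{j+1} = 0` for `j = 0, …, n`
(here `a : Fin (n+2) → A` lists `a₀, …, a_{n+1}`). -/
theorem local_n_cocycle_hyperlocal {A X : Type*} [NonUnitalCStarAlgebra A]
    [NormedAddCommGroup X] [NormedSpace ℂ X] [CompleteSpace X]
    (l r : A →ₗ[ℂ] X →ₗ[ℂ] X)
    (hl : ∀ (a b : A) (x : X), l (a * b) x = l a (l b x))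
    (hr : ∀ (a b : A) (x : X), r (a * b) x = r b (r a x))
    (hlr : ∀ (a b : A) (x : X), l a (r b x) = r b (l a x))
    (hln : ∀ (a : A) (x : X), ‖l a x‖ ≤ ‖a‖ * ‖x‖)
    (hrn : ∀ (a : A) (x : X), ‖r a x‖ ≤ ‖x‖ * ‖a‖)
    (n : ℕ) (hn : 1 ≤ n)
    (T : ContinuousMultilinearMap ℂ (fun _ : Fin n => A) X)
    (hloc : ∀ a : Fin n → A,
      ∃ Φ : ContinuousMultilinearMap ℂ (fun _ : Fin n => A) X,
        IsCocycle l r Φ ∧ T a = Φ a) :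
    ∀ a : Fin (n + 2) → A, (∀ j : Fin (n + 1), a j.castSucc * a j.succ = 0) →
      l (a 0) (r (a (Fin.last (n + 1))) (T fun i => a i.succ.castSucc)) = 0 := by
  intro a ha
  obtain ⟨Φ, hΦ, hT⟩ := hloc (fun i => a i.succ.castSucc)
  have hcoc := hΦ (fun i => a i.castSucc)
  have hmerge : ∀ j : Fin n,
      Φ (mergeArg (fun i : Fin (n+1) => a i.castSucc) j) = 0 := by
    intro j
    refine Φ.map_coord_zero j ?_
    simp only [mergeArg, lt_irrefl, if_neg (lt_irrefl _), if_pos rfl]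
    rw [← Fin.succ_castSucc]
    exact ha j.castSucc
  simp only [hmerge, smul_zero, Finset.sum_const_zero, add_zero,
    Fin.castSucc_zero] at hcoc
  rw [hT, hlr, eq_neg_of_add_eq_zero_left hcoc, map_neg, map_smul,
    ← hr]
  have hz : a (Fin.last n).castSucc * a (Fin.last (n+1)) = 0 := by
    rw [← Fin.succ_last]
    exact ha (Fin.last n)
  rw [hz, map_zero, LinearMap.zero_apply, smul_zero, neg_zero]
end

section
/- Let A be a unital C*-algebra and let δ : A → A be a triple derivation. Then δ(1)* = −δ(1), and δ is a generalized Jordan derivation implemented by δ(1): for all a, b ∈ A, δ(a∘b) = δ(a)∘b + a∘δ(b) − U_{a,b}(δ(1)), where a∘b := ½(ab + ba) and U_{a,b}(z) := (a∘z)∘b + (b∘z)∘a − (a∘b)∘z. -/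
/-- The triple product `{a,b,c} = ½(a b* c + c b* a)` on a C*-algebra. -/
noncomputable def tripleProd {A : Type*} [NonUnitalRing A] [StarRing A] [Module ℂ A]
    (a b c : A) : A :=
  (2 : ℂ)⁻¹ • (a * star b * c + c * star b * a)

/-- The Jordan product `a ∘ b = ½(ab + ba)`. -/
noncomputable def jord {A : Type*} [NonUnitalRing A] [Module ℂ A] (a b : A) : A :=
  (2 : ℂ)⁻¹ • (a * b + b * a)

/-- `U_{a,b}(z) = (a∘z)∘b + (b∘z)∘a − (a∘b)∘z`. -/
noncomputable def Uop {A : Type*} [NonUnitalRing A] [Module ℂ A] (a b z : A) : A :=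
  jord (jord a z) b + jord (jord b z) a - jord (jord a b) z

/-- Every triple derivation `δ` on a unital C*-algebra satisfies `δ(1)* = −δ(1)` and
is a generalized Jordan derivation implemented by `δ(1)`:
`δ(a∘b) = δ(a)∘b + a∘δ(b) − U_{a,b}(δ(1))`. -/
theorem triple_derivation_unital
    {A : Type*} [CStarAlgebra A] (δ : A →ₗ[ℂ] A)
    (hδ : ∀ a b c : A,
      δ (tripleProd a b c) = tripleProd (δ a) b c + tripleProd a (δ b) c + tripleProd a b (δ c)) :
    star (δ 1) = -δ 1 ∧
      ∀ a b : A, δ (jord a b) = jord (δ a) b + jord a (δ b) - Uop a b (δ 1) := by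
  have h111 := hδ 1 1 1
  have hone : tripleProd (1:A) 1 1 = 1 := by
    simp [tripleProd]
    module
  have hz : star (δ 1) = -δ 1 := by
    rw [hone] at h111
    have : tripleProd (δ 1) (1:A) 1 = δ 1 := by
      simp [tripleProd]
      module
    have h2 : tripleProd (1:A) 1 (δ 1) = δ 1 := by
      simp [tripleProd]
      module
    have h3 : tripleProd (1:A) (δ 1) 1 = star (δ 1) := by
      simp [tripleProd]
      module
    rw [this, h2, h3] at h111
    linear_combination (norm := module) -h111
  refine ⟨hz, fun a b => ?_⟩
  have key := hδ a 1 b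
  have hj : tripleProd a (1:A) b = jord a b := by simp [tripleProd, jord]
  rw [hj] at key
  rw [key]
  simp only [tripleProd, jord, Uop, hz, star_one]
  simp only [smul_add, smul_sub, mul_add, add_mul, mul_smul_comm, smul_mul_assoc, mul_one,
    one_mul, mul_neg, neg_mul, smul_neg, smul_smul, mul_assoc]
  module
end

section
/- Let A be a unital C*-algebra and let T : A → A be a bounded local triple derivation with T(1) = 0. Then T is a symmetric operator, that is, T(a*) = T(a)* for every a ∈ A. -/
section TripleProd

variable {A : Type*} [NonUnitalRing A] [StarRing A] [Module ℂ A]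

def IsTripleDerivation (δ : A →ₗ[ℂ] A) : Prop :=
  ∀ x y z : A,
    δ (tripleProd x y z) = tripleProd (δ x) y z + tripleProd x (δ y) z + tripleProd x y (δ z)

theorem tripleProd_comm (a b c : A) : tripleProd a b c = tripleProd c b a := by
  rw [tripleProd, tripleProd, add_comm]

theorem tripleProd_self_left_right (a b : A) : tripleProd a b a = a * star b * a := by
  rw [tripleProd, ← two_smul ℂ, smul_smul, inv_mul_cancel₀ two_ne_zero, one_smul]

end TripleProd

section Unitary

variable {A : Type*} [Ring A] [StarRing A] [Module ℂ A]

theorem tripleProd_mid_right_of_mem_unitary {u : A} (hu : u ∈ unitary A) (a : A) :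
    tripleProd a u u = a := by
  rw [tripleProd, mul_assoc, Unitary.star_mul_self_of_mem hu, Unitary.mul_star_self_of_mem hu,
    mul_one, one_mul, ← two_smul ℂ, smul_smul, inv_mul_cancel₀ two_ne_zero, one_smul]

theorem IsTripleDerivation.mul_star_apply_mul_of_mem_unitary {δ : A →ₗ[ℂ] A}
    (hδ : IsTripleDerivation δ) {u : A} (hu : u ∈ unitary A) :
    u * star (δ u) * u = -δ u := by
  have h := hδ u u u
  rw [tripleProd_mid_right_of_mem_unitary hu, tripleProd_comm u u,
    tripleProd_mid_right_of_mem_unitary hu, tripleProd_self_left_right] at h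
  linear_combination (norm := abel_nf) -h

end Unitary

theorem ContinuousLinearMap.mapsTo_skewAdjoint {A : Type*} [NormedRing A] [NormedAlgebra ℝ A]
    [CompleteSpace A] [StarRing A] [ContinuousStar A] [StarModule ℝ A] (T : A →L[ℝ] A)
    (hT : ∀ u ∈ unitary A, u * star (T u) * u = -T u) (h1 : T 1 = 0) {x : A}
    (hx : x ∈ skewAdjoint A) : T x ∈ skewAdjoint A := by
  let +nondep : NormedAlgebra ℚ A := .restrictScalars ℚ ℝ A
  set u : ℝ → A := fun t => NormedSpace.exp (t • x)
  have hu : HasDerivAt u x 0 := by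
    simpa [u] using hasDerivAt_exp_smul_const' (𝕂 := ℝ) x 0
  have hTu : HasDerivAt (fun t => T (u t)) (T x) 0 := T.hasFDerivAt.comp_hasDerivAt 0 hu
  have hderiv :
      HasDerivAt (fun t => u t * star (T (u t)) * u t + T (u t)) (star (T x) + T x) 0 := by
    simpa [u, h1] using ((hu.fun_mul hTu.star).fun_mul hu).fun_add hTu
  have hconst : (fun t => u t * star (T (u t)) * u t + T (u t)) = fun _ => 0 := funext fun t => by
    rw [hT _ (NormedSpace.exp_mem_unitary_of_mem_skewAdjoint (skewAdjoint.smul_mem t hx)),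
      neg_add_cancel]
  rw [hconst] at hderiv
  exact skewAdjoint.mem_iff.mpr (eq_neg_of_add_eq_zero_left (hderiv.unique (hasDerivAt_const 0 0)))

open Complex in
theorem LinearMap.map_star_of_mapsTo_skewAdjoint {A : Type*} [AddCommGroup A] [Module ℂ A]
    [StarAddMonoid A] [StarModule ℂ A] (T : A →ₗ[ℂ] A)
    (hT : ∀ x ∈ skewAdjoint A, T x ∈ skewAdjoint A) (a : A) :
    T (star a) = star (T a) := by
  have hsa : ∀ h : selfAdjoint A, star (T h) = T h := fun h => by
    have := skewAdjoint.mem_iff.mp (hT _ (h.2.smul_mem_skewAdjoint conj_I))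
    rw [map_smul, star_smul, Complex.star_def, conj_I, neg_smul, neg_inj] at this
    exact smul_right_injective A I_ne_zero this
  conv_lhs => rw [← realPart_add_I_smul_imaginaryPart a]
  conv_rhs => rw [← realPart_add_I_smul_imaginaryPart a]
  simp [hsa]

/-- A bounded local triple derivation `T` on a unital C*-algebra with `T(1) = 0`
is a symmetric operator: `T(a*) = T(a)*` for every `a`. -/
theorem local_triple_derivation_symmetric
    {A : Type*} [CStarAlgebra A] (T : A →L[ℂ] A)
    (hloc : ∀ a : A, ∃ δ : A →ₗ[ℂ] A,
      (∀ x y z : A,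
        δ (tripleProd x y z) = tripleProd (δ x) y z + tripleProd x (δ y) z + tripleProd x y (δ z)) ∧
      T a = δ a)
    (h1 : T 1 = 0) :
    ∀ a : A, T (star a) = star (T a) := by
  refine (T : A →ₗ[ℂ] A).map_star_of_mapsTo_skewAdjoint fun x hx => ?_
  refine (T.restrictScalars ℝ).mapsTo_skewAdjoint (fun u hu => ?_) h1 hx
  obtain ⟨δ, hδ, hTu⟩ := hloc u
  change u * star (T u) * u = -T u
  rw [hTu]
  exact IsTripleDerivation.mul_star_apply_mul_of_mem_unitary hδ hu
end

section
/- Let n be a natural number and let M_n(ℂ) denote the algebra of n × n complex matrices. Then every 2-local derivation Δ : M_n(ℂ) → M_n(ℂ) is a derivation (in particular Δ is linear). -/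
/-!
A derivation `D` of a matrix algebra is traceless, since `trace ∘ D` kills commutators and
idempotents. Applying `D_{x,y}` to `x * y` then gives `tr (Δ x * y) = -tr (x * Δ y)` for a
2-local derivation `Δ`, and nondegeneracy of the trace form makes `Δ` linear.

The Leibniz defect `B u v = Δ (u v) - Δ u v - u Δ v` vanishes when `u v = 0` (use `D_{u,v}`),
and `tr (B u v * w)` is cyclic in `u, v, w`; so it vanishes as soon as one of `u v`, `v w`,
`w u` is zero. On matrix units only `c i j l = tr (B (E i j) (E j l) * E l i)` survives.
Testing against `u = E i j + E i' j`, `w = E l i - E l i'` (so `w u = 0`) shows that `c` does not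
depend on `i`, and `B u 1 = 0` gives `c i j j = 0`; together with cyclicity, `c = 0`.
-/

open Matrix

def IsDerivation {R A : Type*} [CommSemiring R] [Semiring A] [Module R A] (D : A →ₗ[R] A) :
    Prop :=
  ∀ u v, D (u * v) = D u * v + u * D v

def IsTwoLocalDerivation (R : Type*) {A : Type*} [CommSemiring R] [Semiring A] [Module R A]
    (Δ : A → A) : Prop :=
  ∀ x y, ∃ D : A →ₗ[R] A, IsDerivation D ∧ Δ x = D x ∧ Δ y = D y

theorem IsDerivation.map_one_eq_zero {R A : Type*} [CommSemiring R] [Ring A] [Module R A]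
    {D : A →ₗ[R] A} (hD : IsDerivation D) : D 1 = 0 := by
  have h := hD 1 1
  simp only [one_mul, mul_one] at h
  exact left_eq_add.mp h

namespace IsDerivation

variable {n : Type*} [Fintype n] [DecidableEq n] {R : Type*} [CommRing R]
  {D : Matrix n n R →ₗ[R] Matrix n n R}

theorem trace_map_commutator (hD : IsDerivation D) (x y : Matrix n n R) :
    (D (x * y - y * x)).trace = 0 := by
  rw [map_sub, hD, hD, trace_sub, trace_add, trace_add, trace_mul_comm (D y) x,
    trace_mul_comm y (D x)]
  ring

theorem trace_map_of_isIdempotentElem (hD : IsDerivation D) {p : Matrix n n R}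
    (hp : IsIdempotentElem p) : (D p).trace = 0 := by
  have hDp : D p = D p * p + p * D p := by simpa only [hp.eq] using hD p p
  have hcorner : p * D p * p = 0 := by
    have h : p * D p * p = p * D p * p + p * D p * p :=
      calc p * D p * p = p * (D p * p + p * D p) * p := by rw [← hDp]
        _ = p * D p * (p * p) + p * p * D p * p := by noncomm_ring
        _ = p * D p * p + p * D p * p := by rw [hp.eq]
    exact left_eq_add.mp h
  have h₁ : (p * D p).trace = (p * D p * p).trace := by rw [trace_mul_cycle, hp.eq]
  have h₂ : (D p * p).trace = (p * D p * p).trace := (trace_mul_comm _ _).trans h₁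
  rw [hDp, trace_add, h₁, h₂, hcorner, trace_zero, add_zero]

theorem trace_map_eq_zero (hD : IsDerivation D) (z : Matrix n n R) : (D z).trace = 0 := by
  suffices (traceLinearMap n R R).comp D = 0 from LinearMap.congr_fun this z
  refine (stdBasis R n n).ext fun ⟨i, j⟩ => ?_
  rw [stdBasis_eq_single, LinearMap.comp_apply, traceLinearMap_apply, LinearMap.zero_apply]
  obtain rfl | hij := eq_or_ne i j
  · exact hD.trace_map_of_isIdempotentElem (by simp [IsIdempotentElem])
  · simpa [hij.symm] using hD.trace_map_commutator (single i i 1) (single i j 1)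

end IsDerivation

namespace IsTwoLocalDerivation

variable {n : Type*} [Fintype n] [DecidableEq n] {R : Type*} [CommRing R]
  {Δ : Matrix n n R → Matrix n n R}

theorem trace_apply_mul (hΔ : IsTwoLocalDerivation R Δ) (x y : Matrix n n R) :
    (Δ x * y).trace = -(x * Δ y).trace := by
  obtain ⟨D, hD, hx, hy⟩ := hΔ x y
  have h := hD.trace_map_eq_zero (x * y)
  rw [hD, trace_add] at h
  rw [hx, hy]
  linear_combination h

theorem map_add (hΔ : IsTwoLocalDerivation R Δ) (x y : Matrix n n R) :
    Δ (x + y) = Δ x + Δ y := by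
  refine ext_iff_trace_mul_right.mpr fun w => ?_
  simp only [add_mul, trace_add, hΔ.trace_apply_mul]
  ring

theorem map_smul (hΔ : IsTwoLocalDerivation R Δ) (c : R) (x : Matrix n n R) :
    Δ (c • x) = c • Δ x := by
  refine ext_iff_trace_mul_right.mpr fun w => ?_
  simp only [smul_mul_assoc, trace_smul, hΔ.trace_apply_mul, smul_eq_mul]
  ring

def toLinearMap (hΔ : IsTwoLocalDerivation R Δ) : Matrix n n R →ₗ[R] Matrix n n R where
  toFun := Δ
  map_add' := hΔ.map_add
  map_smul' := hΔ.map_smul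

end IsTwoLocalDerivation

section LeibnizDefect

variable {R A : Type*} [CommRing R] [Ring A] [Algebra R A]

def leibnizDefect (L : A →ₗ[R] A) : A →ₗ[R] A →ₗ[R] A :=
  LinearMap.mk₂ R (fun u v => L (u * v) - L u * v - u * L v)
    (fun u₁ u₂ v => by simp only [add_mul, map_add]; abel)
    (fun c u v => by simp only [smul_mul_assoc, map_smul, smul_sub])
    (fun u v₁ v₂ => by simp only [mul_add, map_add]; abel)
    (fun c u v => by simp only [mul_smul_comm, map_smul, smul_sub])

variable {L : A →ₗ[R] A}

@[simp]
theorem leibnizDefect_apply (u v : A) :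
    leibnizDefect L u v = L (u * v) - L u * v - u * L v :=
  rfl

theorem IsDerivation.of_leibnizDefect_eq_zero (h : leibnizDefect L = 0) : IsDerivation L :=
  fun u v => by
    have huv := LinearMap.congr_fun₂ h u v
    rwa [leibnizDefect_apply, LinearMap.zero_apply, LinearMap.zero_apply, sub_sub,
      sub_eq_zero] at huv

theorem IsTwoLocalDerivation.leibnizDefect_eq_zero_of_mul_eq_zero
    (hL : IsTwoLocalDerivation R L) {u v : A} (huv : u * v = 0) :
    leibnizDefect L u v = 0 := by
  obtain ⟨D, hD, hu, hv⟩ := hL u v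
  rw [leibnizDefect_apply, hu, hv, sub_sub, ← hD, huv, map_zero, map_zero, sub_zero]

theorem IsTwoLocalDerivation.leibnizDefect_one_right (hL : IsTwoLocalDerivation R L)
    (u : A) : leibnizDefect L u 1 = 0 := by
  obtain ⟨D, hD, h1, -⟩ := hL 1 1
  rw [leibnizDefect_apply, mul_one, mul_one, h1, hD.map_one_eq_zero, mul_zero, sub_self,
    sub_zero]

end LeibnizDefect

namespace IsTwoLocalDerivation

variable {n : Type*} [Fintype n] [DecidableEq n] {R : Type*} [CommRing R]
  {L : Matrix n n R →ₗ[R] Matrix n n R}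

theorem trace_leibnizDefect_mul (hL : IsTwoLocalDerivation R L) (u v w : Matrix n n R) :
    (leibnizDefect L u v * w).trace
      = (u * L (v * w)).trace + (v * L (w * u)).trace + (w * L (u * v)).trace := by
  have h₁ : (L (u * v) * w).trace = (w * L (u * v)).trace := trace_mul_comm _ _
  have h₂ : (L u * v * w).trace = -(u * L (v * w)).trace := by
    rw [mul_assoc]; exact hL.trace_apply_mul u (v * w)
  have h₃ : (u * L v * w).trace = -(v * L (w * u)).trace := by
    rw [trace_mul_cycle, trace_mul_comm]; exact hL.trace_apply_mul v (w * u)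
  rw [leibnizDefect_apply, sub_mul, sub_mul, trace_sub, trace_sub, h₁, h₂, h₃]
  ring

theorem trace_leibnizDefect_mul_cycle (hL : IsTwoLocalDerivation R L) (u v w : Matrix n n R) :
    (leibnizDefect L u v * w).trace = (leibnizDefect L v w * u).trace := by
  rw [hL.trace_leibnizDefect_mul, hL.trace_leibnizDefect_mul]
  ring

theorem trace_leibnizDefect_single_mul_single_of_ne (hL : IsTwoLocalDerivation R L)
    {i j k l p q : n} (h : j ≠ k ∨ l ≠ p ∨ q ≠ i) :
    (leibnizDefect L (single i j 1) (single k l 1) * single p q 1).trace = 0 := by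
  rcases h with h | h | h
  · rw [hL.leibnizDefect_eq_zero_of_mul_eq_zero (single_mul_single_of_ne _ _ _ _ h _), zero_mul,
      trace_zero]
  · rw [hL.trace_leibnizDefect_mul_cycle,
      hL.leibnizDefect_eq_zero_of_mul_eq_zero (single_mul_single_of_ne _ _ _ _ h _), zero_mul,
      trace_zero]
  · rw [hL.trace_leibnizDefect_mul_cycle, hL.trace_leibnizDefect_mul_cycle,
      hL.leibnizDefect_eq_zero_of_mul_eq_zero (single_mul_single_of_ne _ _ _ _ h _), zero_mul,
      trace_zero]

theorem leibnizDefect_single_single_same (hL : IsTwoLocalDerivation R L) (i j : n) :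
    leibnizDefect L (single i j 1) (single j j 1) = 0 := by
  have h : single i j (1 : R) * (1 - single j j 1) = 0 := by simp [mul_sub]
  rw [← sub_sub_cancel 1 (single j j 1), map_sub, hL.leibnizDefect_one_right,
    hL.leibnizDefect_eq_zero_of_mul_eq_zero h, sub_zero]

theorem trace_leibnizDefect_single_mul_single_eq_of_left (hL : IsTwoLocalDerivation R L)
    (i i' j l : n) :
    (leibnizDefect L (single i j 1) (single j l 1) * single l i 1).trace
      = (leibnizDefect L (single i' j 1) (single j l 1) * single l i' 1).trace := by
  obtain rfl | hi := eq_or_ne i i'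
  · rfl
  have hwu : (single l i (1 : R) - single l i' 1) * (single i j 1 + single i' j 1) = 0 := by
    simp [mul_add, sub_mul, hi, hi.symm]
  have h : (leibnizDefect L (single i j 1 + single i' j 1) (single j l 1)
      * (single l i 1 - single l i' 1)).trace = 0 := by
    rw [hL.trace_leibnizDefect_mul_cycle, hL.trace_leibnizDefect_mul_cycle,
      hL.leibnizDefect_eq_zero_of_mul_eq_zero hwu, zero_mul, trace_zero]
  rw [LinearMap.map_add₂, add_mul, mul_sub, mul_sub, trace_add, trace_sub, trace_sub,
    hL.trace_leibnizDefect_single_mul_single_of_ne (Or.inr (Or.inr hi.symm)),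
    hL.trace_leibnizDefect_single_mul_single_of_ne (Or.inr (Or.inr hi))] at h
  linear_combination h

theorem trace_leibnizDefect_single_mul_single_eq_zero (hL : IsTwoLocalDerivation R L)
    (i j l : n) : (leibnizDefect L (single i j 1) (single j l 1) * single l i 1).trace = 0 := by
  rw [hL.trace_leibnizDefect_mul_cycle, hL.trace_leibnizDefect_single_mul_single_eq_of_left j i,
    hL.trace_leibnizDefect_mul_cycle, hL.leibnizDefect_single_single_same, zero_mul, trace_zero]

theorem leibnizDefect_single_single (hL : IsTwoLocalDerivation R L) (i j k l : n) :
    leibnizDefect L (single i j 1) (single k l 1) = 0 := by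
  ext p q
  have hentry : (leibnizDefect L (single i j 1) (single k l 1) * single q p 1).trace
      = leibnizDefect L (single i j 1) (single k l 1) p q := by
    simp [trace_mul_single]
  rw [Matrix.zero_apply, ← hentry]
  by_cases h : j = k ∧ l = q ∧ p = i
  · obtain ⟨rfl, rfl, rfl⟩ := h
    exact hL.trace_leibnizDefect_single_mul_single_eq_zero p j l
  · exact hL.trace_leibnizDefect_single_mul_single_of_ne (by tauto)

theorem leibnizDefect_eq_zero (hL : IsTwoLocalDerivation R L) : leibnizDefect L = 0 :=
  LinearMap.ext_basis (stdBasis R n n) (stdBasis R n n) fun ⟨i, j⟩ ⟨k, l⟩ => by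
    rw [stdBasis_eq_single, stdBasis_eq_single, LinearMap.zero_apply, LinearMap.zero_apply]
    exact hL.leibnizDefect_single_single i j k l

theorem isDerivation (hL : IsTwoLocalDerivation R L) : IsDerivation L :=
  .of_leibnizDefect_eq_zero hL.leibnizDefect_eq_zero

end IsTwoLocalDerivation

/-- **Kim–Kim.**  Every 2-local derivation on the matrix algebra `Mₙ(ℂ)` is a
derivation (in particular, it is linear). -/
theorem two_local_derivation_matrix_is_derivation
    (n : ℕ) (Δ : Matrix (Fin n) (Fin n) ℂ → Matrix (Fin n) (Fin n) ℂ)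
    (hΔ : ∀ x y : Matrix (Fin n) (Fin n) ℂ,
      ∃ D : Matrix (Fin n) (Fin n) ℂ →ₗ[ℂ] Matrix (Fin n) (Fin n) ℂ,
        (∀ u v, D (u * v) = D u * v + u * D v) ∧ Δ x = D x ∧ Δ y = D y) :
    ∃ D : Matrix (Fin n) (Fin n) ℂ →ₗ[ℂ] Matrix (Fin n) (Fin n) ℂ,
      (∀ u v, D (u * v) = D u * v + u * D v) ∧ ∀ x, Δ x = D x := by
  have hΔ : IsTwoLocalDerivation ℂ Δ := hΔ
  exact ⟨hΔ.toLinearMap, IsTwoLocalDerivation.isDerivation hΔ, fun _ => rfl⟩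
end

section
/- Let H be a complex Hilbert space and let u, c ∈ B(H) with u positive and having trivial kernel, and c self-adjoint. If the spectrum of c²u contains no strictly positive real number, then c = 0. Consequently, if u and c are as above and uc + cu = 0, then c = 0. -/
/-! `c u c` is positive and has the same nonzero spectrum as `c² u`, so the spectral hypothesis
forces `σ(c u c) = {0}`, hence `c u c = 0`. Then `(√u c)* (√u c) = c u c = 0` gives `u c = 0`, and
injectivity of `u` gives `c = 0`. Anticommutation turns `c² u` into `-(c u c)`, whose spectrum
is nonpositive. -/

open scoped NNReal

section CStarAlgebra

variable {A : Type*} [CStarAlgebra A] [PartialOrder A] [StarOrderedRing A]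

theorem eq_zero_of_nonneg_of_forall_pos_notMem_spectrum {a : A} (ha : 0 ≤ a)
    (h : ∀ t : ℝ, 0 < t → (t : ℂ) ∉ spectrum ℂ a) : a = 0 := by
  refine CFC.eq_zero_of_spectrum_subset_zero (R := ℝ≥0) a fun t ht => ?_
  by_contra ht0
  exact h t (NNReal.coe_pos.mpr (pos_iff_ne_zero.mpr ht0)) (spectrum.algebraMap_mem ℂ ht)

theorem forall_pos_notMem_spectrum_neg {a : A} (ha : 0 ≤ a) :
    ∀ t : ℝ, 0 < t → (t : ℂ) ∉ spectrum ℂ (-a) := by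
  intro t ht hmem
  rw [← spectrum.neg_eq, Set.mem_neg, ← Complex.ofReal_neg] at hmem
  have : (0 : ℝ) ≤ -t := spectrum_nonneg_of_nonneg ha (spectrum.of_algebraMap_mem ℂ hmem)
  linarith

theorem mul_eq_zero_of_star_mul_mul_eq_zero {u c : A} (hu : 0 ≤ u) (h : star c * u * c = 0) :
    u * c = 0 := by
  set s := CFC.sqrt u
  have hs : IsSelfAdjoint s := .of_nonneg (CFC.sqrt_nonneg u)
  have hss : s * s = u := CFC.sqrt_mul_sqrt_self u
  have hsc : s * c = 0 := by
    rw [← CStarRing.star_mul_self_eq_zero_iff, star_mul, hs.star_eq, ← h, ← hss]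
    noncomm_ring
  rw [← hss, mul_assoc, hsc, mul_zero]

end CStarAlgebra

/-- Let `u, c ∈ B(H)` with `u` positive with trivial kernel and `c` self-adjoint.
If the spectrum of `c²u` contains no strictly positive real number, then `c = 0`;
consequently if `uc + cu = 0` then `c = 0`. -/
theorem selfadjoint_eq_zero_of_spectrum_or_anticommute
    {H : Type*} [NormedAddCommGroup H] [InnerProductSpace ℂ H] [CompleteSpace H]
    (u c : H →L[ℂ] H) (hu : u.IsPositive) (huker : ∀ ξ : H, u ξ = 0 → ξ = 0)
    (hc : IsSelfAdjoint c) :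
    ((∀ t : ℝ, 0 < t → (t : ℂ) ∉ spectrum ℂ (c * c * u)) → c = 0) ∧
    (u * c + c * u = 0 → c = 0) := by
  have hu0 : 0 ≤ u := (ContinuousLinearMap.nonneg_iff_isPositive u).mpr hu
  have hcuc : 0 ≤ c * u * c := hc.conjugate_nonneg hu0
  have of_conj_eq_zero (h : c * u * c = 0) : c = 0 := by
    have huc := mul_eq_zero_of_star_mul_mul_eq_zero hu0 (c := c) (by rwa [hc.star_eq])
    ext x
    exact huker _ (by simpa using congr($huc x))
  have of_spectrum (hspec : ∀ t : ℝ, 0 < t → (t : ℂ) ∉ spectrum ℂ (c * c * u)) : c = 0 := by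
    refine of_conj_eq_zero <|
      eq_zero_of_nonneg_of_forall_pos_notMem_spectrum hcuc fun t ht hmem => ?_
    have hrot := (spectrum.nonzero_mul_comm (c * u) c).subset
      ⟨hmem, by simpa using ht.ne'⟩
    exact hspec t ht (by simpa only [mul_assoc] using hrot.1)
  refine ⟨of_spectrum, fun hanti => of_spectrum ?_⟩
  have hcu : c * u = -(u * c) := eq_neg_of_add_eq_zero_right hanti
  rw [mul_assoc, hcu, mul_neg, ← mul_assoc]
  exact forall_pos_notMem_spectrum_neg hcuc
end
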